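/- arXiv:2112.12646 — 3 statements merged into one kernel-verified Lean document; each statement's English description precedes it below -/
import Mathlib

section
/- Let X be a nonempty compact metric space. Then X is antipodal (for every x ∈ X there exists x̄ ∈ X with d(x,x̄) = d(x,y) + d(y,x̄) for all y ∈ X) if and only if the tight span E(X) is a convex subset of the space of real-valued functions on X: for all f, g ∈ E(X) and all λ ∈ [0,1], the function λf + (1−λ)g belongs to E(X). -/
/-!
Every `f ∈ E(X)` is 1-Lipschitz, so on a compact space each value `f x` is attained by some
partner `y` with `f x + f y = d(x, y)`. If `X` is antipodal, the partner can always be taken to be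
the antipode `x̄`; the identities `f x + f x̄ = d(x, x̄)` are affine in `f`, so they pass to
convex combinations and certify minimality. Conversely, let `x̄` be farthest from `x` and take
a partner `w` of `x` for the midpoint `(d(y, ·) + d(x̄, ·))/2`: the two triangle inequalities
through `y` and through `x̄` must both be equalities, which forces `w = x̄` and
`d(x, x̄) = d(x, y) + d(y, x̄)`.
-/

/-- `Δ(X)`: functions satisfying `f x + f y ≥ d(x, y)`. -/
def DeltaSet (X : Type*) [MetricSpace X] : Set (X → ℝ) :=
  {f | ∀ x y : X, dist x y ≤ f x + f y}

/-- The tight span `E(X)`: pointwise minimal elements of `Δ(X)`. -/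
def TightSpan (X : Type*) [MetricSpace X] : Set (X → ℝ) :=
  {f | f ∈ DeltaSet X ∧ ∀ g ∈ DeltaSet X, (∀ x, g x ≤ f x) → g = f}

section

variable {X : Type*} [MetricSpace X]

lemma DeltaSet.nonneg {f : X → ℝ} (hf : f ∈ DeltaSet X) (x : X) : 0 ≤ f x := by
  linarith [dist_self x ▸ hf x x]

lemma convex_deltaSet : Convex ℝ (DeltaSet X) := by
  intro f hf g hg a b ha hb hab x y
  simp only [Pi.add_apply, Pi.smul_apply, smul_eq_mul]
  linear_combination mul_le_mul_of_nonneg_left (hf x y) ha + mul_le_mul_of_nonneg_left (hg x y) hb -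
    dist x y * hab

lemma dist_mem_tightSpan (x : X) : (fun y => dist x y) ∈ TightSpan X := by
  refine ⟨fun a b => ?_, fun g hg hle => funext fun y => ?_⟩
  · simpa only [dist_comm a x] using dist_triangle a x b
  have hgx : g x = 0 := le_antisymm (by simpa using hle x) (DeltaSet.nonneg hg x)
  linarith [hg x y, hle y]

lemma mem_tightSpan_of_exists_add_eq_dist {f : X → ℝ} (hf : f ∈ DeltaSet X)
    (hpartner : ∀ x, ∃ y, f x + f y = dist x y) : f ∈ TightSpan X := by
  refine ⟨hf, fun g hg hgf => funext fun x => ?_⟩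
  obtain ⟨y, hy⟩ := hpartner x
  linarith [hg x y, hgf x, hgf y]

namespace TightSpan

/-- Otherwise `f` could be lowered by `ε / 2` at `x` and stay in `Δ(X)`. -/
lemma exists_add_lt_dist_add {f : X → ℝ} (hf : f ∈ TightSpan X) (x : X) {ε : ℝ} (hε : 0 < ε) :
    ∃ y, f x + f y < dist x y + ε := by
  classical
  by_contra! hfar
  have hfx : ε / 2 ≤ f x := by linarith [dist_self x ▸ hfar x]
  set g := Function.update f x (f x - ε / 2)
  have hgx : g x = f x - ε / 2 := Function.update_self x _ f
  have hg_ne : ∀ z ≠ x, g z = f z := fun z hz => Function.update_of_ne hz _ f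
  have hg : g ∈ DeltaSet X := by
    intro a b
    by_cases ha : a = x <;> by_cases hb : b = x
    · rw [ha, hb, hgx, dist_self]; linarith
    · rw [ha, hgx, hg_ne b hb]; linarith [hfar b]
    · rw [hb, hgx, hg_ne a ha]; linarith [dist_comm x a ▸ hfar a]
    · rw [hg_ne a ha, hg_ne b hb]; exact hf.1 a b
  have hgf : ∀ z, g z ≤ f z := by
    intro z
    rcases eq_or_ne z x with rfl | hz
    · linarith
    · rw [hg_ne z hz]
  linarith [congrFun (hf.2 g hg hgf) x]

lemma le_add_dist {f : X → ℝ} (hf : f ∈ TightSpan X) (x y : X) : f x ≤ f y + dist x y := by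
  refine le_of_forall_pos_le_add fun ε hε => ?_
  obtain ⟨z, hz⟩ := exists_add_lt_dist_add hf x hε
  linarith [dist_triangle x y z, hf.1 y z]

lemma lipschitzWith {f : X → ℝ} (hf : f ∈ TightSpan X) : LipschitzWith 1 f :=
  LipschitzWith.of_le_add (le_add_dist hf)

lemma exists_add_eq_dist [CompactSpace X] {f : X → ℝ} (hf : f ∈ TightSpan X) (x : X) :
    ∃ y, f x + f y = dist x y := by
  have hcont : Continuous fun y => f x + f y - dist x y :=
    (continuous_const.add (lipschitzWith hf).continuous).sub (continuous_const.dist continuous_id)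
  obtain ⟨y, hy⟩ := hcont.exists_forall_le' x (by simp)
  refine ⟨y, le_antisymm (not_lt.1 fun hpos => ?_) (hf.1 x y)⟩
  obtain ⟨z, hz⟩ := exists_add_lt_dist_add hf x (sub_pos.2 hpos)
  linarith [hy z]

lemma add_eq_dist_of_antipode [CompactSpace X] {f : X → ℝ} (hf : f ∈ TightSpan X)
    {x xb : X} (hxb : ∀ y, dist x xb = dist x y + dist y xb) : f x + f xb = dist x xb := by
  obtain ⟨y, hy⟩ := exists_add_eq_dist hf x
  linarith [le_add_dist hf xb y, dist_comm xb y, hxb y, hf.1 x xb]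

end TightSpan

lemma dist_eq_add_dist_of_forall_dist_le [CompactSpace X] {x xb y : X}
    (hmax : ∀ z, dist x z ≤ dist x xb)
    (hmid : (fun z => (1 / 2 : ℝ) * dist y z + (1 - 1 / 2) * dist xb z) ∈ TightSpan X) :
    dist x xb = dist x y + dist y xb := by
  obtain ⟨w, hw⟩ := TightSpan.exists_add_eq_dist hmid x
  simp only [dist_comm y x, dist_comm xb x] at hw
  have hxbw : dist xb w = 0 := by
    linarith [dist_triangle x y w, dist_triangle x xb w, hmax w, dist_nonneg (x := xb) (y := w)]
  linarith [dist_triangle x y w, hmax w, dist_triangle y w xb, dist_triangle y xb w, dist_comm w xb]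

end

theorem antipodal_iff_tightSpan_convex_general {X : Type*} [MetricSpace X]
    [CompactSpace X] :
    (∀ x : X, ∃ xb : X, ∀ y : X, dist x xb = dist x y + dist y xb) ↔
    (∀ f ∈ TightSpan X, ∀ g ∈ TightSpan X, ∀ l ∈ Set.Icc (0 : ℝ) 1,
      (fun x : X => l * f x + (1 - l) * g x) ∈ TightSpan X) := by
  constructor
  · intro hant f hf g hg l ⟨hl0, hl1⟩
    refine mem_tightSpan_of_exists_add_eq_dist
      (convex_deltaSet hf.1 hg.1 hl0 (sub_nonneg.2 hl1) (add_sub_cancel l 1)) fun x => ?_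
    obtain ⟨xb, hxb⟩ := hant x
    refine ⟨xb, ?_⟩
    linear_combination l * TightSpan.add_eq_dist_of_antipode hf hxb +
      (1 - l) * TightSpan.add_eq_dist_of_antipode hg hxb
  · intro hconv x
    obtain ⟨xb, hxb⟩ := (continuous_const.dist continuous_id).exists_forall_ge' (f := dist x) x
      (by simp)
    exact ⟨xb, fun y => dist_eq_add_dist_of_forall_dist_le hxb
      (hconv _ (dist_mem_tightSpan y) _ (dist_mem_tightSpan xb) (1 / 2) (by norm_num))⟩

/-- A nonempty compact metric space `X` is antipodal if and only if its tight span
is a convex subset of the space of real-valued functions on `X`. -/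
theorem antipodal_iff_tightSpan_convex {X : Type*} [MetricSpace X] [Nonempty X]
    [CompactSpace X] :
    (∀ x : X, ∃ xb : X, ∀ y : X, dist x xb = dist x y + dist y xb) ↔
    (∀ f ∈ TightSpan X, ∀ g ∈ TightSpan X, ∀ l ∈ Set.Icc (0 : ℝ) 1,
      (fun x : X => l * f x + (1 - l) * g x) ∈ TightSpan X) :=
  antipodal_iff_tightSpan_convex_general
end

section
/- For every Lebesgue-measurable set A ⊆ [0,π], the function h_A belongs to E(S¹): h_A is well defined on S¹ = ℝ/2πℤ, is 1-Lipschitz with respect to the geodesic metric, and satisfies h_A(φ) + h_A(φ+π) = π for all φ ∈ S¹. -/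
noncomputable section

open MeasureTheory

/-- The circle `ℝ/2πℤ` with the quotient metric (geodesic metric, circumference `2π`). -/
abbrev S1 : Type := AddCircle (2 * Real.pi)

instance : Fact (0 < 2 * Real.pi) := ⟨by positivity⟩

/-- The tight span of `S¹`: 1-Lipschitz functions with `f θ + f (θ + π) = π`. -/
def ES1 : Set (S1 → ℝ) :=
  {f | LipschitzWith 1 f ∧ ∀ θ : S1, f θ + f (θ + ((Real.pi : ℝ) : S1)) = Real.pi}

/-- The function `h_A : S¹ → ℝ` associated to a measurable set `A ⊆ [0,π]`:
`h_A φ = (π − μ A) + 2 μ(A ∩ [0,φ]) − φ` for `φ ∈ [0,π]` and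
`h_A φ = π − h_A (φ − π)` for `φ ∈ (π, 2π)`. -/
def hA (A : Set ℝ) : S1 → ℝ := fun φ =>
  let t : ℝ := (AddCircle.equivIco (2 * Real.pi) 0 φ : ℝ)
  if t ≤ Real.pi then
    (Real.pi - (volume A).toReal) + 2 * (volume (A ∩ Set.Icc 0 t)).toReal - t
  else
    Real.pi - ((Real.pi - (volume A).toReal)
      + 2 * (volume (A ∩ Set.Icc 0 (t - Real.pi))).toReal - (t - Real.pi))

/-! The profile `g = hAProfile A`, `g t = (π - μ A) + 2 μ (A ∩ [0, t]) - t`, is 1-Lipschitz, since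
`t ↦ μ (A ∩ [0, t])` grows at a rate between `0` and `1`, and `A ⊆ [0, π]` gives
`g 0 + g π = π`, which is exactly what makes `h_A (θ + π) = π - h_A θ` hold across the seams
`0` and `π`. So the half-turn `θ ↦ θ + π` preserves distances between values of `h_A`. For such a
function on a circle of circumference `2c`, a Lipschitz bound on `[0, c]` spreads by translation
to `[-c, 2c]`; up to a common half-turn any two points of the circle lift to `x ∈ [0, c]` and a
point `y` with `|x - y| ≤ c` equal to their circle distance, so both lifts lie in `[-c, 2c]`. -/

open Set Real

theorem LipschitzOnWith.Icc_union_Icc {E : Type*} [PseudoMetricSpace E] {K : NNReal} {f : ℝ → E}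
    {a b c : ℝ} (hab : LipschitzOnWith K f (Icc a b)) (hbc : LipschitzOnWith K f (Icc b c)) :
    LipschitzOnWith K f (Icc a c) := by
  have across : ∀ x ∈ Icc a b, ∀ y ∈ Icc b c, dist (f x) (f y) ≤ K * dist x y := by
    intro x hx y hy
    have hb₁ : b ∈ Icc a b := ⟨hx.1.trans hx.2, le_rfl⟩
    have hb₂ : b ∈ Icc b c := ⟨le_rfl, hy.1.trans hy.2⟩
    calc dist (f x) (f y) ≤ dist (f x) (f b) + dist (f b) (f y) := dist_triangle _ _ _
      _ ≤ K * dist x b + K * dist b y :=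
        add_le_add (hab.dist_le_mul x hx b hb₁) (hbc.dist_le_mul b hb₂ y hy)
      _ = K * dist x y := by
        rw [← mul_add, dist_add_dist_of_mem_segment]
        rw [segment_eq_Icc (hx.2.trans hy.1)]
        exact ⟨hx.2, hy.1⟩
  rw [lipschitzOnWith_iff_dist_le_mul]
  intro x hx y hy
  rcases le_total x b with hxb | hbx <;> rcases le_total y b with hyb | hby
  · exact hab.dist_le_mul x ⟨hx.1, hxb⟩ y ⟨hy.1, hyb⟩
  · exact across x ⟨hx.1, hxb⟩ y ⟨hby, hy.2⟩
  · rw [dist_comm, dist_comm x]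
    exact across y ⟨hy.1, hyb⟩ x ⟨hbx, hx.2⟩
  · exact hbc.dist_le_mul x ⟨hbx, hx.2⟩ y ⟨hby, hy.2⟩

theorem LipschitzOnWith.preimage_add_const {E : Type*} [PseudoMetricSpace E] {K : NNReal}
    {f : ℝ → E} {s : Set ℝ} {d : ℝ} (hf : LipschitzOnWith K f s)
    (hd : ∀ u v, dist (f (u + d)) (f (v + d)) = dist (f u) (f v)) :
    LipschitzOnWith K f ((· + d) ⁻¹' s) := by
  rw [lipschitzOnWith_iff_dist_le_mul]
  intro x hx y hy
  rw [← hd, ← dist_add_right x y d]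
  exact hf.dist_le_mul _ hx _ hy

namespace AddCircle

theorem exists_coe_eq_dist_eq {p : ℝ} (hp : p ≠ 0) (x : ℝ) (η : AddCircle p) :
    ∃ y : ℝ, (y : AddCircle p) = η ∧ dist x y = dist (x : AddCircle p) η ∧ dist x y ≤ |p| / 2 := by
  induction η using QuotientAddGroup.induction_on with
  | H z =>
  set n : ℤ := round (p⁻¹ * (x - z))
  have hcoe : ((z + n * p : ℝ) : AddCircle p) = z := by
    rw [coe_add, ← zsmul_eq_mul, coe_zsmul, coe_period, smul_zero, add_zero]
  have hdist : dist x (z + n * p) = dist (x : AddCircle p) z := by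
    rw [dist_eq_norm (x : AddCircle p), ← coe_sub, norm_eq, Real.dist_eq, sub_add_eq_sub_sub]
  exact ⟨z + n * p, hcoe, hdist, hdist ▸ norm_le_half_period p hp⟩

theorem exists_mem_Ico_eq_coe_or_eq_coe_add {c : ℝ} (hc : 0 < c) (θ : AddCircle (2 * c)) :
    ∃ x ∈ Ico 0 c, θ = x ∨ θ = x + c := by
  have : Fact (0 < 2 * c) := ⟨by linarith⟩
  set t : ℝ := (equivIco (2 * c) 0 θ : ℝ)
  have ht : t ∈ Ico 0 (0 + 2 * c) := (equivIco (2 * c) 0 θ).2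
  have hθ : θ = t := coe_equivIco.symm
  rcases lt_or_ge t c with h | h
  · exact ⟨t, ⟨ht.1, h⟩, Or.inl hθ⟩
  · refine ⟨t - c, ⟨by linarith, by linarith [ht.2]⟩, Or.inr ?_⟩
    rw [hθ, ← coe_add, sub_add_cancel]

theorem lipschitzWith_of_lipschitzOnWith_Icc {E : Type*} [PseudoMetricSpace E] {K : NNReal}
    {c : ℝ} (hc : 0 < c) {f : AddCircle (2 * c) → E}
    (hshift : ∀ θ η : AddCircle (2 * c), dist (f (θ + c)) (f (η + c)) = dist (f θ) (f η))
    (hf : LipschitzOnWith K (fun x : ℝ => f x) (Icc 0 c)) : LipschitzWith K f := by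
  set F : ℝ → E := fun x => f x
  have hF : ∀ u v, dist (F (u + c)) (F (v + c)) = dist (F u) (F v) := fun u v => by
    simp only [F, coe_add]
    exact hshift _ _
  have hF' : ∀ u v, dist (F (u + -c)) (F (v + -c)) = dist (F u) (F v) := fun u v => by
    rw [← hF, neg_add_cancel_right, neg_add_cancel_right]
  have hwide : LipschitzOnWith K F (Icc (-c) (2 * c)) := by
    have hleft : LipschitzOnWith K F (Icc (-c) 0) := by
      simpa using hf.preimage_add_const hF
    have hright : LipschitzOnWith K F (Icc c (2 * c)) := by
      simpa [two_mul] using hf.preimage_add_const hF'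
    exact (hleft.Icc_union_Icc hf).Icc_union_Icc hright
  have hnear : ∀ x ∈ Icc 0 c, ∀ η, dist (f x) (f η) ≤ K * dist (x : AddCircle (2 * c)) η := by
    intro x hx η
    obtain ⟨y, rfl, hdist, hle⟩ := exists_coe_eq_dist_eq (by positivity) x η
    rw [abs_of_pos (by positivity), Real.dist_eq, abs_le] at hle
    rw [← hdist]
    exact hwide.dist_le_mul x ⟨by linarith [hx.1], by linarith [hx.2]⟩
      y ⟨by linarith [hx.1], by linarith [hx.2]⟩
  refine LipschitzWith.of_dist_le_mul fun θ η => ?_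
  obtain ⟨x, hx, rfl | rfl⟩ := exists_mem_Ico_eq_coe_or_eq_coe_add hc θ
  · exact hnear x (Ico_subset_Icc_self hx) η
  · have := hnear x (Ico_subset_Icc_self hx) (η - c)
    rwa [← hshift, sub_add_cancel, ← dist_add_right _ _ (c : AddCircle (2 * c)),
      sub_add_cancel] at this

end AddCircle

theorem monotone_volume_real_inter_Icc (A : Set ℝ) (a : ℝ) :
    Monotone fun t => volume.real (A ∩ Icc a t) := fun _ _ h =>
  measureReal_mono (inter_subset_inter_right A (Icc_subset_Icc_right h))
    (measure_inter_lt_top_of_right_ne_top measure_Icc_lt_top.ne).ne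

theorem volume_real_inter_Icc_le_add (A : Set ℝ) (a : ℝ) {t s : ℝ} (hts : t ≤ s) :
    volume.real (A ∩ Icc a s) ≤ volume.real (A ∩ Icc a t) + (s - t) := by
  have hsub : A ∩ Icc a s ⊆ (A ∩ Icc a t) ∪ Ioc t s := fun z ⟨hzA, hza, hzs⟩ =>
    (le_or_gt z t).imp (fun hzt => ⟨hzA, hza, hzt⟩) (fun htz => ⟨htz, hzs⟩)
  calc volume.real (A ∩ Icc a s) ≤ volume.real ((A ∩ Icc a t) ∪ Ioc t s) :=
        measureReal_mono hsub (measure_union_ne_top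
          (measure_inter_lt_top_of_right_ne_top measure_Icc_lt_top.ne).ne measure_Ioc_lt_top.ne)
    _ ≤ volume.real (A ∩ Icc a t) + volume.real (Ioc t s) := measureReal_union_le _ _
    _ = volume.real (A ∩ Icc a t) + (s - t) := by rw [Real.volume_real_Ioc_of_le hts]

def hAProfile (A : Set ℝ) (t : ℝ) : ℝ :=
  (π - volume.real A) + 2 * volume.real (A ∩ Icc 0 t) - t

theorem lipschitzWith_hAProfile (A : Set ℝ) : LipschitzWith 1 (hAProfile A) := by
  refine LipschitzWith.of_le_add fun x y => ?_
  simp only [hAProfile, Real.dist_eq]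
  rcases le_total x y with hxy | hyx
  · linarith [monotone_volume_real_inter_Icc A 0 hxy, neg_abs_le (x - y)]
  · linarith [volume_real_inter_Icc_le_add A 0 hyx, le_abs_self (x - y)]

theorem hAProfile_zero_add_hAProfile_pi {A : Set ℝ} (hA : A ⊆ Icc 0 π) :
    hAProfile A 0 + hAProfile A π = π := by
  have hnull : volume (A ∩ Icc (0 : ℝ) 0) = 0 := measure_mono_null inter_subset_right (by simp)
  simp only [hAProfile, measureReal_def, hnull, inter_eq_left.2 hA, ENNReal.toReal_zero]
  ring

theorem hA_coe (A : Set ℝ) {t : ℝ} (ht : t ∈ Ico 0 (2 * π)) :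
    hA A t = if t ≤ π then hAProfile A t else π - hAProfile A (t - π) := by
  have ht' : t ∈ Ico 0 (0 + 2 * π) := by rwa [zero_add]
  simp only [hA, AddCircle.equivIco_coe_of_mem ht']
  rfl

theorem hA_coe_of_mem_Icc (A : Set ℝ) {x : ℝ} (hx : x ∈ Icc 0 π) : hA A x = hAProfile A x := by
  rw [hA_coe A ⟨hx.1, by linarith [hx.2, pi_pos]⟩, if_pos hx.2]

theorem hA_coe_add_pi {A : Set ℝ} (hA' : A ⊆ Icc 0 π) {x : ℝ} (hx : x ∈ Ico 0 π) :
    hA A ↑(x + π) = π - hAProfile A x := by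
  rw [hA_coe A ⟨by linarith [hx.1, pi_pos], by linarith [hx.2]⟩]
  split_ifs with h
  · obtain rfl : x = 0 := by linarith [hx.1]
    rw [zero_add]
    linarith [hAProfile_zero_add_hAProfile_pi hA']
  · rw [add_sub_cancel_right]

theorem hA_add_pi {A : Set ℝ} (hA' : A ⊆ Icc 0 π) (θ : S1) : hA A (θ + π) = π - hA A θ := by
  obtain ⟨x, hx, rfl | rfl⟩ := AddCircle.exists_mem_Ico_eq_coe_or_eq_coe_add pi_pos θ
  · rw [← AddCircle.coe_add, hA_coe_add_pi hA' hx, hA_coe_of_mem_Icc A (Ico_subset_Icc_self hx)]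
  · rw [add_assoc, ← AddCircle.coe_add, ← two_mul, AddCircle.coe_period, add_zero,
      ← AddCircle.coe_add, hA_coe_add_pi hA' hx, hA_coe_of_mem_Icc A (Ico_subset_Icc_self hx)]
    ring

theorem lipschitzOnWith_hA_coe (A : Set ℝ) :
    LipschitzOnWith 1 (fun x : ℝ => hA A x) (Icc 0 π) := by
  rw [lipschitzOnWith_iff_dist_le_mul]
  intro x hx y hy
  rw [hA_coe_of_mem_Icc A hx, hA_coe_of_mem_Icc A hy]
  exact (lipschitzWith_hAProfile A).dist_le_mul x y

theorem hA_mem_ES1_general (A : Set ℝ) (hA' : A ⊆ Set.Icc 0 Real.pi) :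
    hA A ∈ ES1 := by
  have hanti := hA_add_pi hA'
  refine ⟨AddCircle.lipschitzWith_of_lipschitzOnWith_Icc pi_pos (fun θ η => ?_)
    (lipschitzOnWith_hA_coe A), fun θ => by rw [hanti]; ring⟩
  rw [hanti, hanti, dist_sub_left]

/-- For every Lebesgue-measurable `A ⊆ [0,π]`, the function `h_A` belongs to `E(S¹)`. -/
theorem hA_mem_ES1 (A : Set ℝ) (hA' : A ⊆ Set.Icc 0 Real.pi) (hmeas : MeasurableSet A) :
    hA A ∈ ES1 :=
  hA_mem_ES1_general A hA'

end
end

section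
/- In the Banach space C(S¹) of continuous real-valued functions on S¹ with the sup norm, the closure of the convex hull of the set {h_A : A ⊆ [0,π] Lebesgue measurable} equals E(S¹). -/
noncomputable section

open MeasureTheory

/-!
Each `h_A` is 1-Lipschitz, since on `[0, π]` it is `c + 2 μ(A ∩ [0, t]) - t` with slope `±1`,
and satisfies `h_A θ + h_A (θ + π) = π`; these two conditions cut out a closed convex set, which
gives one inclusion. Conversely, for `f` in that set, `t ↦ (f t - f 0 + t) / 2` is nondecreasing
and 1-Lipschitz on `[0, π]`; putting into each cell `[kδ, (k+1)δ]` of a grid an interval whose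
length is the increment of this function over the cell yields an `A` with `h_A = f` at the grid
points, hence `|h_A - f| ≤ 2δ` everywhere. So the set of `h_A` alone is already dense.
-/

open Set Real
open scoped NNReal

namespace AddCircle

variable {p : ℝ}

lemma min_sub_le_dist_coe (hp : 0 ≤ p) (s t : ℝ) :
    min (t - s) (p - (t - s)) ≤ dist (t : AddCircle p) s := by
  rw [dist_eq_norm, ← coe_sub, norm_eq]
  set n := round (p⁻¹ * (t - s))
  rcases le_or_gt n 0 with hn | hn
  · have : (n : ℝ) * p ≤ 0 := mul_nonpos_of_nonpos_of_nonneg (by exact_mod_cast hn) hp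
    exact (min_le_left _ _).trans ((by linarith : t - s ≤ t - s - n * p).trans (le_abs_self _))
  · have : p ≤ (n : ℝ) * p := le_mul_of_one_le_left hp (by exact_mod_cast hn)
    exact (min_le_right _ _).trans ((by linarith : p - (t - s) ≤ -(t - s - n * p)).trans
      (neg_le_abs _))

lemma lipschitzWith_coe : LipschitzWith 1 ((↑) : ℝ → AddCircle p) :=
  LipschitzWith.of_dist_le_mul fun s t => by
    rw [NNReal.coe_one, one_mul, dist_eq_norm, dist_eq_norm, ← coe_sub]
    exact QuotientAddGroup.norm_mk_le_norm

variable [Fact (0 < p)] {a : ℝ}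

lemma liftIco_coe_apply_of_mem_Icc {B : Type*} {f : ℝ → B} (hf : f a = f (a + p)) {x : ℝ}
    (hx : x ∈ Icc a (a + p)) : liftIco p a f x = f x := by
  rcases hx.2.lt_or_eq with hlt | rfl
  · exact liftIco_coe_apply ⟨hx.1, hlt⟩
  · rw [coe_add_period, liftIco_coe_apply (left_mem_Ico.2 (lt_add_of_pos_right a Fact.out)), hf]

lemma lipschitzWith_liftIco {β : Type*} [PseudoMetricSpace β] {f : ℝ → β} {K : ℝ≥0}
    (hf : LipschitzOnWith K f (Icc a (a + p))) (hfa : f a = f (a + p)) :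
    LipschitzWith K (liftIco p a f) := by
  have hp : 0 < p := Fact.out
  have key : ∀ s ∈ Ico a (a + p), ∀ t ∈ Ico a (a + p), s ≤ t →
      dist (f t) (f s) ≤ K * dist (t : AddCircle p) s := by
    intro s hs t ht hst
    have hs' := Ico_subset_Icc_self hs
    have ht' := Ico_subset_Icc_self ht
    have hend : a + p ∈ Icc a (a + p) := right_mem_Icc.2 (by linarith)
    have direct : dist (f t) (f s) ≤ K * (t - s) := by
      simpa [Real.dist_eq, abs_of_nonneg (sub_nonneg.2 hst)] using hf.dist_le_mul t ht' s hs'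
    have around : dist (f t) (f s) ≤ K * (p - (t - s)) := calc
      dist (f t) (f s) ≤ dist (f t) (f (a + p)) + dist (f a) (f s) := by
        rw [← hfa]; exact dist_triangle _ _ _
      _ ≤ K * dist t (a + p) + K * dist a s :=
        add_le_add (hf.dist_le_mul t ht' _ hend) (hf.dist_le_mul a (left_mem_Icc.2 hend.1) s hs')
      _ = K * (p - (t - s)) := by
        rw [Real.dist_eq, Real.dist_eq, abs_of_nonpos (by linarith [ht.2]),
          abs_of_nonpos (by linarith [hs.1])]
        ring
    calc dist (f t) (f s) ≤ K * min (t - s) (p - (t - s)) := by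
          rw [mul_min_of_nonneg _ _ K.coe_nonneg]; exact le_min direct around
      _ ≤ K * dist (t : AddCircle p) s := by gcongr; exact min_sub_le_dist_coe hp.le s t
  refine LipschitzWith.of_dist_le_mul fun x y => ?_
  obtain ⟨s, hs, rfl⟩ := (coe_image_Ico_eq p a).symm ▸ mem_univ x
  obtain ⟨t, ht, rfl⟩ := (coe_image_Ico_eq p a).symm ▸ mem_univ y
  rw [liftIco_coe_apply hs, liftIco_coe_apply ht]
  rcases le_total s t with hst | hts
  · rw [dist_comm, dist_comm (s : AddCircle p)]; exact key s hs t ht hst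
  · exact key t ht s hs hts

end AddCircle

lemma LipschitzWith.ite_le {β : Type*} [PseudoMetricSpace β] {f g : ℝ → β} {K : ℝ≥0}
    (hf : LipschitzWith K f) (hg : LipschitzWith K g) {b : ℝ} (hb : f b = g b) :
    LipschitzWith K (fun t => if t ≤ b then f t else g t) := by
  have cross : ∀ x y, x ≤ b → b < y → dist (f x) (g y) ≤ K * dist x y := fun x y hx hy => calc
    dist (f x) (g y) ≤ dist (f x) (f b) + dist (g b) (g y) := by
      rw [← hb]; exact dist_triangle _ _ _
    _ ≤ K * dist x b + K * dist b y := add_le_add (hf.dist_le_mul _ _) (hg.dist_le_mul _ _)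
    _ = K * dist x y := by
      rw [Real.dist_eq, Real.dist_eq, Real.dist_eq, abs_of_nonpos (by linarith),
        abs_of_neg (by linarith), abs_of_neg (by linarith)]
      ring
  refine LipschitzWith.of_dist_le_mul fun x y => ?_
  by_cases hx : x ≤ b <;> by_cases hy : y ≤ b <;> simp only [hx, hy, if_true, if_false]
  · exact hf.dist_le_mul x y
  · exact cross x y hx (not_le.1 hy)
  · rw [dist_comm, dist_comm x]; exact cross y x hy (not_le.1 hx)
  · exact hg.dist_le_mul x y

lemma convex_setOf_lipschitzWith {α E : Type*} [PseudoMetricSpace α] [SeminormedAddCommGroup E]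
    [NormedSpace ℝ E] (K : ℝ≥0) : Convex ℝ {f : α → E | LipschitzWith K f} := by
  intro f hf g hg s t hs ht hst
  refine LipschitzWith.of_dist_le_mul fun x y => ?_
  calc dist ((s • f + t • g) x) ((s • f + t • g) y)
      = ‖s • (f x - f y) + t • (g x - g y)‖ := by
        rw [dist_eq_norm]; simp only [Pi.add_apply, Pi.smul_apply, smul_sub]; abel_nf
    _ ≤ s * dist (f x) (f y) + t * dist (g x) (g y) := by
        refine (norm_add_le _ _).trans ?_
        rw [norm_smul, norm_smul, Real.norm_of_nonneg hs, Real.norm_of_nonneg ht,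
          ← dist_eq_norm, ← dist_eq_norm]
    _ ≤ s * (K * dist x y) + t * (K * dist x y) := by
        gcongr
        exacts [hf.dist_le_mul x y, hg.dist_le_mul x y]
    _ = K * dist x y := by rw [← add_mul, hst, one_mul]

def volumeUpTo (A : Set ℝ) (t : ℝ) : ℝ := (volume (A ∩ Icc 0 t)).toReal

def hAOnIcc (A : Set ℝ) (t : ℝ) : ℝ := (π - (volume A).toReal) + 2 * volumeUpTo A t - t

def hALift (A : Set ℝ) (t : ℝ) : ℝ := if t ≤ π then hAOnIcc A t else π - hAOnIcc A (t - π)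

lemma hA_eq_liftIco (A : Set ℝ) : hA A = AddCircle.liftIco (2 * π) 0 (hALift A) := rfl

section volumeUpTo

variable (A : Set ℝ)

lemma volume_inter_Icc_ne_top (t : ℝ) : volume (A ∩ Icc 0 t) ≠ ⊤ :=
  ne_top_of_le_ne_top (by simp) (measure_mono inter_subset_right)

lemma volumeUpTo_mono : Monotone (volumeUpTo A) := fun _ t hst =>
  ENNReal.toReal_mono (volume_inter_Icc_ne_top A t)
    (measure_mono (inter_subset_inter_right _ (Icc_subset_Icc_right hst)))

lemma volumeUpTo_le_add {s t : ℝ} (hst : s ≤ t) :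
    volumeUpTo A t ≤ volumeUpTo A s + (t - s) := by
  have hcover : A ∩ Icc 0 t ⊆ (A ∩ Icc 0 s) ∪ Ioc s t := by
    rintro x ⟨hxA, hx0, hxt⟩
    rcases le_or_gt x s with hxs | hxs
    exacts [Or.inl ⟨hxA, hx0, hxs⟩, Or.inr ⟨hxs, hxt⟩]
  have := ENNReal.toReal_le_add ((measure_mono hcover).trans (measure_union_le _ _))
    (volume_inter_Icc_ne_top A s) (by simp)
  rwa [Real.volume_Ioc, ENNReal.toReal_ofReal (sub_nonneg.2 hst)] at this

lemma volumeUpTo_zero : volumeUpTo A 0 = 0 := by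
  rw [volumeUpTo, Icc_self, measure_mono_null inter_subset_right (Real.volume_singleton),
    ENNReal.toReal_zero]

lemma volumeUpTo_of_subset {t : ℝ} (hsub : A ⊆ Icc 0 t) : volumeUpTo A t = (volume A).toReal := by
  rw [volumeUpTo, inter_eq_self_of_subset_left hsub]

lemma lipschitzWith_hAOnIcc : LipschitzWith 1 (hAOnIcc A) := by
  refine LipschitzWith.of_le_add_mul 1 fun x y => ?_
  rw [NNReal.coe_one, one_mul, Real.dist_eq]
  simp only [hAOnIcc]
  rcases le_total y x with hyx | hxy
  · linarith [volumeUpTo_le_add A hyx, volumeUpTo_mono A hyx, le_abs_self (x - y)]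
  · linarith [volumeUpTo_le_add A hxy, volumeUpTo_mono A hxy, neg_abs_le (x - y)]

end volumeUpTo

section hAProperties

variable {A : Set ℝ}

lemma hAOnIcc_zero_add_hAOnIcc_pi (hsub : A ⊆ Icc 0 π) : hAOnIcc A 0 + hAOnIcc A π = π := by
  simp only [hAOnIcc, volumeUpTo_zero, volumeUpTo_of_subset A hsub]
  ring

lemma lipschitzWith_hALift (hsub : A ⊆ Icc 0 π) : LipschitzWith 1 (hALift A) := by
  have hright : LipschitzWith 1 fun t => π - hAOnIcc A (t - π) :=
    LipschitzWith.of_dist_le_mul fun x y => by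
      rw [dist_sub_left, ← dist_sub_right x y π]
      exact (lipschitzWith_hAOnIcc A).dist_le_mul _ _
  refine (lipschitzWith_hAOnIcc A).ite_le hright ?_
  rw [sub_self]
  linarith [hAOnIcc_zero_add_hAOnIcc_pi hsub]

lemma hALift_zero_eq (hsub : A ⊆ Icc 0 π) : hALift A 0 = hALift A (0 + 2 * π) := by
  have := hAOnIcc_zero_add_hAOnIcc_pi hsub
  simp only [hALift, pi_pos.le, if_true, zero_add, show ¬ 2 * π ≤ π by linarith [pi_pos],
    if_false, show 2 * π - π = π by ring]
  linarith

lemma lipschitzWith_hA (hsub : A ⊆ Icc 0 π) : LipschitzWith 1 (hA A) := by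
  rw [hA_eq_liftIco]
  exact AddCircle.lipschitzWith_liftIco (lipschitzWith_hALift hsub).lipschitzOnWith
    (hALift_zero_eq hsub)

lemma hA_coe_eq_hALift (hsub : A ⊆ Icc 0 π) {t : ℝ} (ht : t ∈ Icc 0 (2 * π)) :
    hA A t = hALift A t := by
  rw [hA_eq_liftIco]
  exact AddCircle.liftIco_coe_apply_of_mem_Icc (hALift_zero_eq hsub) (by rwa [zero_add])

lemma hA_coe_eq_hAOnIcc (hsub : A ⊆ Icc 0 π) {t : ℝ} (ht : t ∈ Icc 0 π) :
    hA A t = hAOnIcc A t := by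
  rw [hA_coe_eq_hALift hsub ⟨ht.1, by linarith [ht.2, pi_pos]⟩, hALift, if_pos ht.2]

lemma hA_coe_add_hA_coe_add_pi (hsub : A ⊆ Icc 0 π) {t : ℝ} (ht : t ∈ Icc 0 π) :
    hA A t + hA A (t + π : ℝ) = π := by
  rw [hA_coe_eq_hAOnIcc hsub ht,
    hA_coe_eq_hALift hsub ⟨by linarith [ht.1, pi_pos], by linarith [ht.2]⟩, hALift]
  rcases ht.1.eq_or_lt with rfl | ht0
  · rw [zero_add, if_pos le_rfl]; exact hAOnIcc_zero_add_hAOnIcc_pi hsub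
  · rw [if_neg (by linarith), add_sub_cancel_right]; ring

end hAProperties

namespace S1

lemma exists_eq_coe_or_eq_coe_add_pi (θ : S1) :
    ∃ t ∈ Icc 0 π, θ = t ∨ θ = ((t : ℝ) : S1) + ((π : ℝ) : S1) := by
  obtain ⟨s, ⟨hs0, hs⟩, rfl⟩ := (AddCircle.coe_image_Ico_eq (2 * π) 0).symm ▸ mem_univ θ
  rcases le_or_gt s π with hsπ | hsπ
  · exact ⟨s, ⟨hs0, hsπ⟩, Or.inl rfl⟩
  · refine ⟨s - π, ⟨by linarith, by linarith⟩, Or.inr ?_⟩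
    rw [← AddCircle.coe_add, sub_add_cancel]

lemma add_pi_add_pi (θ : S1) : θ + ((π : ℝ) : S1) + ((π : ℝ) : S1) = θ := by
  rw [add_assoc, ← AddCircle.coe_add, ← two_mul, AddCircle.coe_period, add_zero]

end S1

def tightSpanS1 : Set (S1 → ℝ) :=
  {f | LipschitzWith 1 f ∧ ∀ θ : S1, f θ + f (θ + ((π : ℝ) : S1)) = π}

lemma isClosed_tightSpanS1 : IsClosed tightSpanS1 := by
  rw [tightSpanS1, ofPred_and, ofPred_forall]
  exact (isClosed_setOfPred_lipschitzWith 1).inter <| isClosed_iInter fun θ =>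
    isClosed_eq ((continuous_apply θ).add (continuous_apply (θ + ((π : ℝ) : S1)))) continuous_const

lemma convex_tightSpanS1 : Convex ℝ tightSpanS1 := by
  refine (convex_setOf_lipschitzWith 1).inter ?_
  intro f hf g hg s t _ _ hst θ
  simp only [Pi.add_apply, Pi.smul_apply, smul_eq_mul]
  linear_combination s * hf θ + t * hg θ + π * hst

lemma S1.add_eq_pi_of_forall_Icc {g : S1 → ℝ}
    (hg : ∀ t ∈ Icc 0 π, g t + g (((t : ℝ) : S1) + ((π : ℝ) : S1)) = π) (θ : S1) :
    g θ + g (θ + ((π : ℝ) : S1)) = π := by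
  obtain ⟨t, ht, rfl | rfl⟩ := S1.exists_eq_coe_or_eq_coe_add_pi θ
  · exact hg t ht
  · rw [S1.add_pi_add_pi, add_comm]; exact hg t ht

lemma S1.abs_sub_le_of_forall_Icc {f g : S1 → ℝ} (hf : f ∈ tightSpanS1) (hg : g ∈ tightSpanS1)
    {c : ℝ} (hfg : ∀ t ∈ Icc 0 π, |f t - g t| ≤ c) (θ : S1) : |f θ - g θ| ≤ c := by
  obtain ⟨t, ht, rfl | rfl⟩ := S1.exists_eq_coe_or_eq_coe_add_pi θ
  · exact hfg t ht
  · rw [abs_sub_comm]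
    convert hfg t ht using 2
    linarith [hf.2 t, hg.2 t]

lemma hA_mem_tightSpanS1 {A : Set ℝ} (hsub : A ⊆ Icc 0 π) : hA A ∈ tightSpanS1 := by
  refine ⟨lipschitzWith_hA hsub, S1.add_eq_pi_of_forall_Icc fun t ht => ?_⟩
  rw [← AddCircle.coe_add]
  exact hA_coe_add_hA_coe_add_pi hsub ht

section Grid

variable {δ : ℝ}

lemma Ioc_sub_subset_Icc {a : ℝ} (ha : a ∈ Icc 0 δ) {k j : ℕ} (hkj : k < j) :
    Ioc ((k + 1) * δ - a) ((k + 1) * δ) ⊆ Icc 0 (j * δ) := by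
  have hkj' : (k : ℝ) + 1 ≤ j := by exact_mod_cast hkj
  have : (k + 1) * δ ≤ j * δ := mul_le_mul_of_nonneg_right hkj' (ha.1.trans ha.2)
  rintro x ⟨hx1, hx2⟩
  exact ⟨by nlinarith [ha.2, k.cast_nonneg (α := ℝ)], hx2.trans this⟩

lemma volume_biUnion_Ioc_inter_Icc {α : ℕ → ℝ} (hα : ∀ k, α k ∈ Icc 0 δ) {j n : ℕ}
    (hjn : j ≤ n) :
    volume ((⋃ k ∈ Finset.range n, Ioc ((k + 1) * δ - α k) ((k + 1) * δ)) ∩ Icc 0 (j * δ)) =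
      ENNReal.ofReal (∑ k ∈ Finset.range j, α k) := by
  have hδ : 0 ≤ δ := (hα 0).1.trans (hα 0).2
  -- The pieces are open on the left, so those with `k ≥ j` miss `Icc 0 (j * δ)` entirely.
  have hcut : (⋃ k ∈ Finset.range n, Ioc ((k + 1) * δ - α k) ((k + 1) * δ)) ∩ Icc 0 (j * δ) =
      ⋃ k ∈ Finset.range j, Ioc ((k + 1) * δ - α k) ((k + 1) * δ) := by
    ext x
    simp only [mem_inter_iff, mem_iUnion, Finset.mem_range, exists_prop]
    constructor
    · rintro ⟨⟨k, hkn, hx⟩, hxj⟩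
      refine ⟨k, lt_of_not_ge fun hjk => ?_, hx⟩
      have hjk' : (j : ℝ) ≤ k := by exact_mod_cast hjk
      nlinarith [hx.1, hxj.2, (hα k).2]
    · rintro ⟨k, hkj, hx⟩
      exact ⟨⟨k, hkj.trans_le hjn, hx⟩, Ioc_sub_subset_Icc (hα k) hkj hx⟩
  have hgrid : ∀ k : ℕ, Ioc ((k + 1) * δ - α k) ((k + 1) * δ) ⊆ Ioc (k * δ) ((k + 1 : ℕ) * δ) :=
    fun k x hx => ⟨by linarith [hx.1, (hα k).2], by push_cast; exact hx.2⟩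
  have hdisj : (Finset.range j : Set ℕ).Pairwise
      (Function.onFun Disjoint fun k : ℕ => Ioc ((k + 1) * δ - α k) ((k + 1) * δ)) :=
    ((Monotone.pairwise_disjoint_on_Ioc_succ (f := fun k : ℕ => (k : ℝ) * δ)
      fun a b hab => mul_le_mul_of_nonneg_right (by exact_mod_cast hab) hδ).mono
        fun k l hkl => hkl.mono (hgrid k) (hgrid l)).set_pairwise _
  rw [hcut, measure_biUnion_finset hdisj fun k _ => measurableSet_Ioc,
    ENNReal.ofReal_sum_of_nonneg fun k _ => (hα k).1]
  simp only [Real.volume_Ioc, sub_sub_cancel]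

lemma exists_volumeUpTo_eq_on_grid {F : ℝ → ℝ} (hF : LipschitzWith 1 F) (hδ : 0 < δ) (n : ℕ) :
    ∃ A ⊆ Icc 0 (n * δ), MeasurableSet A ∧
      ∀ j ≤ n, 2 * volumeUpTo A (j * δ) = F (j * δ) - F 0 + j * δ := by
  set α : ℕ → ℝ := fun k => (F ((k + 1) * δ) - F (k * δ) + δ) / 2
  have hα : ∀ k, α k ∈ Icc 0 δ := fun k => by
    have := (hF.dist_le_mul ((k + 1) * δ) (k * δ))
    rw [NNReal.coe_one, one_mul, Real.dist_eq, Real.dist_eq,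
      show (k + 1) * δ - k * δ = δ by ring, abs_of_pos hδ, abs_le] at this
    simp only [α, mem_Icc]
    constructor <;> linarith [this.1, this.2]
  refine ⟨⋃ k ∈ Finset.range n, Ioc ((k + 1) * δ - α k) ((k + 1) * δ),
    iUnion₂_subset fun k hk => Ioc_sub_subset_Icc (hα k) (Finset.mem_range.1 hk),
    Finset.measurableSet_biUnion _ fun _ _ => measurableSet_Ioc, fun j hj => ?_⟩
  rw [volumeUpTo, volume_biUnion_Ioc_inter_Icc hα hj,
    ENNReal.toReal_ofReal (Finset.sum_nonneg fun k _ => (hα k).1), Finset.mul_sum]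
  have htel := Finset.sum_range_sub (fun k : ℕ => F (k * δ)) j
  simp only [Nat.cast_add, Nat.cast_one, Nat.cast_zero, zero_mul] at htel
  simp only [α, mul_div_cancel₀ _ (two_ne_zero (α := ℝ)), Finset.sum_add_distrib, htel,
    Finset.sum_const, Finset.card_range, nsmul_eq_mul]

lemma abs_sub_le_of_eq_on_grid {G H : ℝ → ℝ} {K : ℝ≥0} (hG : LipschitzWith K G)
    (hH : LipschitzWith K H) (hδ : 0 < δ) {n : ℕ} (hGH : ∀ j ≤ n, G (j * δ) = H (j * δ))
    {t : ℝ} (ht : t ∈ Icc 0 (n * δ)) : |G t - H t| ≤ 2 * K * δ := by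
  set j := ⌊t / δ⌋₊
  have hjt : j * δ ≤ t := (le_div_iff₀ hδ).1 (Nat.floor_le (div_nonneg ht.1 hδ.le))
  have htj : t - j * δ ≤ δ := by
    linarith [(div_lt_iff₀ hδ).1 (Nat.lt_floor_add_one (t / δ))]
  have hjn : j ≤ n := Nat.floor_le_of_le ((div_le_iff₀ hδ).2 ht.2)
  have hGt := hG.dist_le_mul t (j * δ)
  have hHt := hH.dist_le_mul (j * δ) t
  rw [Real.dist_eq, Real.dist_eq, abs_of_nonneg (sub_nonneg.2 hjt)] at hGt
  rw [Real.dist_eq, Real.dist_eq, abs_sub_comm (j * δ) t, abs_of_nonneg (sub_nonneg.2 hjt)] at hHt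
  calc |G t - H t| = |(G t - G (j * δ)) + (H (j * δ) - H t)| := by rw [hGH j hjn]; ring_nf
    _ ≤ K * (t - j * δ) + K * (t - j * δ) := (abs_add_le _ _).trans (add_le_add hGt hHt)
    _ ≤ 2 * K * δ := by nlinarith [K.coe_nonneg]

end Grid

lemma exists_hAOnIcc_near {F : ℝ → ℝ} (hF : LipschitzWith 1 F) (hFπ : F 0 + F π = π) {n : ℕ}
    (hn : 0 < n) : ∃ A ⊆ Icc 0 π, MeasurableSet A ∧
      ∀ t ∈ Icc 0 π, |F t - hAOnIcc A t| ≤ 2 * (π / n) := by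
  have hδ : 0 < π / n := by positivity
  have hnδ : n * (π / n) = π := mul_div_cancel₀ _ (by positivity)
  obtain ⟨A, hsub, hmeas, hgrid⟩ := exists_volumeUpTo_eq_on_grid hF hδ n
  rw [hnδ] at hsub
  have hvol : 2 * (volume A).toReal = F π - F 0 + π := by
    rw [← volumeUpTo_of_subset A hsub, ← hnδ]; exact hgrid n le_rfl
  refine ⟨A, hsub, hmeas, fun t ht => ?_⟩
  have := abs_sub_le_of_eq_on_grid hF (lipschitzWith_hAOnIcc A) hδ (n := n)
    (fun j hj => by simp only [hAOnIcc]; linarith [hgrid j hj]) (by rwa [hnδ])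
  simpa using this

lemma exists_hA_near {f : S1 → ℝ} (hf : f ∈ tightSpanS1) {n : ℕ} (hn : 0 < n) :
    ∃ A ⊆ Icc 0 π, MeasurableSet A ∧ ∀ θ, |f θ - hA A θ| ≤ 2 * (π / n) := by
  have hF : LipschitzWith 1 fun t : ℝ => f t := by
    have := hf.1.comp (AddCircle.lipschitzWith_coe (p := 2 * π))
    rwa [mul_one] at this
  have hFπ : f ((0 : ℝ) : S1) + f ((π : ℝ) : S1) = π := by
    simpa using hf.2 ((0 : ℝ) : S1)
  obtain ⟨A, hsub, hmeas, hnear⟩ := exists_hAOnIcc_near hF hFπ hn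
  refine ⟨A, hsub, hmeas, S1.abs_sub_le_of_forall_Icc hf (hA_mem_tightSpanS1 hsub) fun t ht => ?_⟩
  rw [hA_coe_eq_hAOnIcc hsub ht]
  exact hnear t ht

lemma preimage_tightSpanS1_subset_closure :
    (⇑) ⁻¹' tightSpanS1 ⊆ closure
      {g : C(S1, ℝ) | ∃ A : Set ℝ, A ⊆ Icc 0 π ∧ MeasurableSet A ∧ ⇑g = hA A} := by
  intro f hf
  refine Metric.mem_closure_iff.2 fun ε hε => ?_
  obtain ⟨n, hn⟩ := exists_nat_gt (2 * π / ε)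
  have hn0 : (0 : ℝ) < n := (by positivity : 0 < 2 * π / ε).trans hn
  obtain ⟨A, hsub, hmeas, hnear⟩ := exists_hA_near hf (n := n) (by exact_mod_cast hn0)
  refine ⟨⟨hA A, (lipschitzWith_hA hsub).continuous⟩, ⟨A, hsub, hmeas, rfl⟩, ?_⟩
  calc dist f _ ≤ 2 * (π / n) := (ContinuousMap.dist_le (by positivity)).2 fun θ =>
        (Real.dist_eq _ _).trans_le (hnear θ)
    _ < ε := by
        rw [div_lt_iff₀ hε] at hn
        rw [← mul_div_assoc, div_lt_iff₀ hn0]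
        linarith

/-- In `C(S¹, ℝ)` with the sup norm, the closure of the convex hull of
`{h_A : A ⊆ [0,π] Lebesgue measurable}` equals the tight span `E(S¹)`
(the set of 1-Lipschitz functions `f` with `f θ + f (θ + π) = π`). -/
theorem closure_convexHull_hA_eq_ES1 :
    closure (convexHull ℝ
      {g : C(S1, ℝ) | ∃ A : Set ℝ, A ⊆ Set.Icc 0 Real.pi ∧ MeasurableSet A ∧ ⇑g = hA A}) =
    {g : C(S1, ℝ) | LipschitzWith 1 ⇑g ∧
      ∀ θ : S1, g θ + g (θ + ((Real.pi : ℝ) : S1)) = Real.pi} := by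
  change _ = ((⇑) : C(S1, ℝ) → S1 → ℝ) ⁻¹' tightSpanS1
  have hgen : {g : C(S1, ℝ) | ∃ A : Set ℝ, A ⊆ Icc 0 π ∧ MeasurableSet A ∧ ⇑g = hA A} ⊆
      (⇑) ⁻¹' tightSpanS1 := by
    rintro g ⟨A, hsub, -, hg⟩
    rw [mem_preimage, hg]
    exact hA_mem_tightSpanS1 hsub
  have hclosed : IsClosed ((⇑) ⁻¹' tightSpanS1 : Set C(S1, ℝ)) :=
    isClosed_tightSpanS1.preimage continuous_coeFun
  have hconvex : Convex ℝ ((⇑) ⁻¹' tightSpanS1 : Set C(S1, ℝ)) :=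
    convex_tightSpanS1.linear_preimage (ContinuousMap.coeFnLinearMap ℝ)
  exact (closure_minimal (convexHull_min hgen hconvex) hclosed).antisymm
    (preimage_tightSpanS1_subset_closure.trans (closure_mono (subset_convexHull ℝ _)))

end
end
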